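/- arXiv:1208.1863 — 2 statements merged into one kernel-verified Lean document; each statement's English description precedes it below -/
import Mathlib

section
/- Let $X$ be a Banach space whose dual $X^*$ has $M$-cotype $\rho \in [1,\infty)$, let $Y_k$ be normed spaces and $A_k \in \mathcal{B}(X, Y_k)$ for $k \geq 1$. Let $p_0 \in (1, \rho/(\rho-1)]$ and define $r_0 \in (\rho, \infty]$ by $1/p_0 - 1/r_0 = 1 - 1/\rho$. If $(\|A_1\|, \|A_2\|, \ldots) \notin \ell_r$ for every $r \in [\rho, r_0)$, then $\bigcap_{p \in [1, p_0)} \mathcal{D}_p$ is dense in $X$, where $\mathcal{D}_p = \{x \in X : (\|A_1 x\|, \|A_2 x\|, \ldots) \notin \ell_p\}$. -/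
/-!
If the set of `x` with `(‖A k x‖)ₖ ∉ ℓ_q` were not residual, Baire's theorem applied to the
truncations `x ↦ (A₀ x, …, A_{N-1} x) ∈ ℓ_q(Y)` would give a uniform bound
`(∑ₖ ‖A k x‖ ^ q) ^ (1/q) ≤ B ‖x‖`. Choosing functionals `vₖ ∈ X*` with `‖vₖ x‖ ≤ ‖A k x‖` and
`‖A k‖ ≤ 2 ‖vₖ‖`, Hölder's inequality gives `‖∑ cₖ vₖ‖ ≤ B ‖c‖_{q'}`, and testing the `M`-cotype
inequality of `X*` on `cₖ = ‖vₖ‖ ^ (r/q')` bounds the `ℓ_r` norm of `(‖A k‖)ₖ` by `2B/C`, where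
`1/r = 1/ρ - 1/q'`. For `1 < q < p₀` this exponent satisfies `ρ ≤ r < r₀`, contradicting the
hypothesis; intersecting over rational `q` gives the theorem.
-/

open scoped ENNReal
open Finset

def HasMCotypeWith (𝕜 E : Type*) [RCLike 𝕜] [NormedAddCommGroup E] [Module 𝕜 E]
    (ρ C : ℝ) : Prop :=
  ∀ (m : ℕ) (v : Fin m → E), ∃ ε : Fin m → 𝕜, (∀ j, ε j = 1 ∨ ε j = -1) ∧
    ‖∑ j, ε j • v j‖ ≥ C * (∑ j, ‖v j‖ ^ ρ) ^ (1 / ρ)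

theorem rpow_le_div_of_mul_rpow_add_le {S B C u w : ℝ} (hS : 0 ≤ S) (hB : 0 ≤ B) (hC : 0 < C)
    (hw : 0 < w) (h : C * S ^ (u + w) ≤ S ^ u * B) : S ^ w ≤ B / C := by
  rw [le_div_iff₀ hC]
  rcases hS.eq_or_lt with rfl | hS
  · rw [Real.zero_rpow hw.ne', zero_mul]; exact hB
  · rw [Real.rpow_add hS, mul_left_comm, mul_comm _ B] at h
    exact le_of_mul_le_mul_left (by linarith) (Real.rpow_pos_of_pos hS u)

section

variable {𝕜 : Type*} [RCLike 𝕜]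

theorem HasMCotypeWith.sum_norm_rpow_le {E : Type*} [NormedAddCommGroup E] [NormedSpace 𝕜 E]
    {ρ C : ℝ} (hcot : HasMCotypeWith 𝕜 E ρ C) (hC : 0 < C) {N : ℕ} {v : Fin N → E}
    {s r B : ℝ} (hs : 0 < s) (hr : 0 < r) (hρ : 1 / ρ = 1 / s + 1 / r) (hB : 0 ≤ B)
    (hv : ∀ c : Fin N → 𝕜, ‖∑ j, c j • v j‖ ≤ (∑ j, ‖c j‖ ^ s) ^ (1 / s) * B) :
    ∑ j, ‖v j‖ ^ r ≤ (B / C) ^ r := by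
  set S := ∑ j, ‖v j‖ ^ r
  have hS : 0 ≤ S := sum_nonneg fun j _ => by positivity
  -- weights `a j = ‖v j‖ ^ (r / s)` make both sides of the cotype inequality powers of `S`
  set a : Fin N → ℝ := fun j => ‖v j‖ ^ (r / s)
  have hexp : (r / s + 1) * ρ = r := by
    have hρ0 : ρ ≠ 0 := by
      rintro rfl
      rw [div_zero] at hρ
      linarith [show 0 < 1 / s + 1 / r by positivity]
    field_simp at hρ ⊢; linarith
  obtain ⟨ε, hε, hcotε⟩ := hcot N fun j => (a j : 𝕜) • v j
  have hεnorm : ∀ j, ‖ε j‖ = 1 := fun j => by rcases hε j with h | h <;> simp [h]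
  have hlow : C * S ^ (1 / ρ) ≤ ‖∑ j, (ε j * a j) • v j‖ := by
    simp only [mul_smul]
    convert hcotε using 4 with j
    rw [norm_smul, RCLike.norm_ofReal, abs_of_nonneg (by positivity), ← Real.rpow_add_one'
      (norm_nonneg _) (by positivity), ← Real.rpow_mul (norm_nonneg _), hexp]
  have hup : ‖∑ j, (ε j * a j) • v j‖ ≤ S ^ (1 / s) * B := by
    refine (hv _).trans_eq ?_
    congr 3 with j
    rw [norm_mul, hεnorm, one_mul, RCLike.norm_ofReal, abs_of_nonneg (by positivity),
      ← Real.rpow_mul (norm_nonneg _), div_mul_cancel₀ _ hs.ne']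
  have hSr : S ^ (1 / r) ≤ B / C :=
    rpow_le_div_of_mul_rpow_add_le hS hB hC (by positivity) (hρ ▸ hlow.trans hup)
  calc S = (S ^ (1 / r)) ^ r := by rw [← Real.rpow_mul hS, one_div_mul_cancel hr.ne', Real.rpow_one]
    _ ≤ (B / C) ^ r := Real.rpow_le_rpow (by positivity) hSr hr.le

variable {X : Type*} [NormedAddCommGroup X] [NormedSpace 𝕜 X]

theorem StrongDual.norm_sum_smul_le_of_forall_lp_le {ι : Type*} [Fintype ι]
    {v : ι → StrongDual 𝕜 X} {s t B : ℝ} (hst : s.HolderConjugate t) (hB : 0 ≤ B)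
    (hv : ∀ x, (∑ i, ‖v i x‖ ^ t) ^ (1 / t) ≤ B * ‖x‖) (c : ι → 𝕜) :
    ‖∑ i, c i • v i‖ ≤ (∑ i, ‖c i‖ ^ s) ^ (1 / s) * B := by
  refine ContinuousLinearMap.opNorm_le_bound _ (by positivity) fun x => ?_
  calc ‖(∑ i, c i • v i) x‖ = ‖∑ i, c i * v i x‖ := by simp
    _ ≤ ∑ i, ‖c i‖ * ‖v i x‖ := (norm_sum_le _ _).trans_eq (by simp only [norm_mul])
    _ ≤ (∑ i, ‖c i‖ ^ s) ^ (1 / s) * (∑ i, ‖v i x‖ ^ t) ^ (1 / t) :=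
      Real.inner_le_Lp_mul_Lq_of_nonneg _ hst (fun _ _ => norm_nonneg _)
        fun _ _ => norm_nonneg _
    _ ≤ (∑ i, ‖c i‖ ^ s) ^ (1 / s) * (B * ‖x‖) := by gcongr; exact hv x
    _ = _ := by ring

theorem ContinuousLinearMap.exists_norming_functional {Y : Type*} [NormedAddCommGroup Y]
    [NormedSpace 𝕜 Y] (A : X →L[𝕜] Y) :
    ∃ v : StrongDual 𝕜 X, (∀ x, ‖v x‖ ≤ ‖A x‖) ∧ ‖A‖ ≤ 2 * ‖v‖ := by
  rcases (norm_nonneg A).eq_or_lt with hA | hA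
  · exact ⟨0, fun x => by simp, by rw [← hA]; positivity⟩
  obtain ⟨x, hx1, hAx⟩ := A.exists_lt_apply_of_lt_opNorm (half_lt_self hA)
  obtain ⟨g, hg, hgAx⟩ := exists_dual_vector 𝕜 (A x) ((half_pos hA).trans hAx).ne'
  refine ⟨g.comp A, fun y => ?_, ?_⟩
  · simpa [hg] using g.le_opNorm (A y)
  · have : ‖A x‖ ≤ ‖g.comp A‖ := by
      simpa [hgAx] using ((g.comp A).le_opNorm x).trans
        (mul_le_of_le_one_right (norm_nonneg _) hx1.le)
    linarith

variable {Y : ℕ → Type*} [∀ k, NormedAddCommGroup (Y k)] [∀ k, NormedSpace 𝕜 (Y k)]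

theorem HasMCotypeWith.sum_opNorm_rpow_le {ρ C : ℝ}
    (hcot : HasMCotypeWith 𝕜 (StrongDual 𝕜 X) ρ C) (hC : 0 < C)
    (A : ∀ k, X →L[𝕜] Y k) {N : ℕ} {t r B : ℝ} (ht : 1 < t) (hr : 0 < r)
    (hρ : 1 / ρ = (1 - 1 / t) + 1 / r) (hB : 0 ≤ B)
    (hA : ∀ x, (∑ k ∈ range N, ‖A k x‖ ^ t) ^ (1 / t) ≤ B * ‖x‖) :
    ∑ k ∈ range N, ‖A k‖ ^ r ≤ (2 * B / C) ^ r := by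
  choose v hvA hAv using fun k => (A k).exists_norming_functional
  have hts := Real.HolderConjugate.conjExponent ht
  have hv : ∑ j : Fin N, ‖v j‖ ^ r ≤ (B / C) ^ r := by
    refine hcot.sum_norm_rpow_le hC hts.symm.pos hr (by rw [hρ, one_div, one_div,
      hts.one_sub_inv, one_div]) hB (StrongDual.norm_sum_smul_le_of_forall_lp_le hts.symm hB
        fun x => le_trans ?_ (hA x))
    rw [Fin.sum_univ_eq_sum_range (fun k => ‖v k x‖ ^ t)]
    gcongr with k
    exact hvA k x
  calc ∑ k ∈ range N, ‖A k‖ ^ r ≤ ∑ k ∈ range N, 2 ^ r * ‖v k‖ ^ r := by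
        gcongr with k
        rw [← Real.mul_rpow zero_le_two (norm_nonneg _)]
        exact Real.rpow_le_rpow (norm_nonneg _) (hAv k) hr.le
    _ ≤ 2 ^ r * (B / C) ^ r := by
        rw [← mul_sum, ← Fin.sum_univ_eq_sum_range (fun k => ‖v k‖ ^ r)]
        gcongr
    _ = (2 * B / C) ^ r := by rw [← Real.mul_rpow zero_le_two (by positivity), mul_div_assoc]

theorem ContinuousLinearMap.opNorm_le_of_forall_mem_ball_norm_le {F : Type*}
    [NormedAddCommGroup F] [NormedSpace 𝕜 F] (f : X →L[𝕜] F) {x₀ : X} {δ c : ℝ} (hδ : 0 < δ)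
    (h : ∀ x ∈ Metric.ball x₀ δ, ‖f x‖ ≤ c) : ‖f‖ ≤ 4 * c / δ := by
  have hc : 0 ≤ c := (norm_nonneg _).trans (h x₀ (Metric.mem_ball_self hδ))
  refine opNorm_le_of_unit_norm (by positivity) fun x hx => ?_
  set y : X := ((δ / 2 : ℝ) : 𝕜) • x
  have hy : ‖y‖ = δ / 2 := by simp [y, norm_smul, hx, abs_of_pos hδ]
  have hx₀y : x₀ + y ∈ Metric.ball x₀ δ := by
    rw [Metric.mem_ball, dist_self_add_left, hy]; linarith
  have : δ / 2 * ‖f x‖ ≤ 2 * c := calc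
    δ / 2 * ‖f x‖ = ‖f (x₀ + y) - f x₀‖ := by
      simp [y, norm_smul, abs_of_pos hδ]
    _ ≤ ‖f (x₀ + y)‖ + ‖f x₀‖ := norm_sub_le _ _
    _ ≤ 2 * c := by linarith [h _ hx₀y, h x₀ (Metric.mem_ball_self hδ)]
  rw [le_div_iff₀ hδ]
  linarith

theorem banach_steinhaus_or_residual [CompleteSpace X] {F : Type*} [NormedAddCommGroup F]
    [NormedSpace 𝕜 F] {ι : Type*} (g : ι → X →L[𝕜] F) :
    (∃ B, ∀ i, ‖g i‖ ≤ B) ∨ {x | ¬ BddAbove (Set.range fun i => ‖g i x‖)} ∈ residual X := by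
  set K : ℕ → Set X := fun n => {x | ∀ i, ‖g i x‖ ≤ n}
  have hK : ∀ n, IsClosed (K n) := fun n => by
    simp only [K, Set.ofPred_forall]
    exact isClosed_iInter fun i => isClosed_le (g i).continuous.norm continuous_const
  by_cases h : ∃ n, (interior (K n)).Nonempty
  · obtain ⟨n, x₀, hx₀⟩ := h
    obtain ⟨δ, hδ, hball⟩ := Metric.isOpen_iff.1 isOpen_interior x₀ hx₀
    exact .inl ⟨4 * n / δ, fun i => (g i).opNorm_le_of_forall_mem_ball_norm_le hδ
      fun x hx => interior_subset (hball hx) i⟩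
  · push Not at h
    refine .inr (Filter.mem_of_superset (countable_iInter_mem.2 fun n =>
      residual_of_dense_open (hK n).isOpen_compl (interior_eq_empty_iff_dense_compl.1 (h n))) ?_)
    rintro x hx ⟨B, hB⟩
    obtain ⟨n, hn⟩ := exists_nat_ge B
    exact Set.mem_iInter.1 hx n fun i => (hB ⟨i, rfl⟩).trans hn

noncomputable def lpTruncation (A : ∀ k, X →L[𝕜] Y k) (p : ℝ≥0∞) [Fact (1 ≤ p)] (N : ℕ) :
    X →L[𝕜] lp Y p :=
  ∑ k ∈ range N, (lp.singleContinuousLinearMap 𝕜 Y p k).comp (A k)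

theorem norm_lpTruncation_apply (A : ∀ k, X →L[𝕜] Y k) {p : ℝ≥0∞} [Fact (1 ≤ p)] (hp : p ≠ ⊤)
    (N : ℕ) (x : X) :
    ‖lpTruncation A p N x‖ = (∑ k ∈ range N, ‖A k x‖ ^ p.toReal) ^ (1 / p.toReal) := by
  have hp0 : 0 < p.toReal := ENNReal.toReal_pos (zero_lt_one.trans_le Fact.out).ne' hp
  rw [← lp.norm_sum_single hp0, one_div, Real.rpow_rpow_inv (norm_nonneg _) hp0.ne']
  simp [lpTruncation]

theorem HasMCotypeWith.residual_setOf_not_memℓp [CompleteSpace X] {ρ C : ℝ}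
    (hcot : HasMCotypeWith 𝕜 (StrongDual 𝕜 X) ρ C) (hC : 0 < C) (A : ∀ k, X →L[𝕜] Y k)
    {q : ℝ≥0∞} (hq : 1 < q) (hq' : q ≠ ⊤) {r : ℝ} (hr : 0 < r)
    (hρ : 1 / ρ = (1 - 1 / q.toReal) + 1 / r)
    (hA : ¬ Memℓp (fun k => ‖A k‖) (ENNReal.ofReal r)) :
    {x | ¬ Memℓp (fun k => ‖A k x‖) q} ∈ residual X := by
  have : Fact (1 ≤ q) := ⟨hq.le⟩
  have ht : 1 < q.toReal := by simpa using ENNReal.toReal_strict_mono hq' hq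
  have hnorm := norm_lpTruncation_apply A hq'
  rcases banach_steinhaus_or_residual (lpTruncation A q) with ⟨B, hB⟩ | hres
  · refine absurd (memℓp_gen' (C := (2 * B / C) ^ r) fun s => ?_) hA
    obtain ⟨N, hsN⟩ := s.exists_nat_subset_range
    have hB0 : 0 ≤ B := (norm_nonneg _).trans (hB 0)
    calc ∑ k ∈ s, ‖‖A k‖‖ ^ (ENNReal.ofReal r).toReal ≤ ∑ k ∈ range N, ‖A k‖ ^ r := by
          simp only [ENNReal.toReal_ofReal hr.le, norm_norm]
          exact sum_le_sum_of_subset_of_nonneg hsN fun _ _ _ => by positivity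
      _ ≤ (2 * B / C) ^ r := hcot.sum_opNorm_rpow_le hC A ht hr hρ hB0 fun x =>
          hnorm N x ▸ (lpTruncation A q N).le_of_opNorm_le (hB N) x
  · refine Filter.mem_of_superset hres fun x hx hmem => hx ?_
    have hsum := (memℓp_gen_iff (by linarith)).1 hmem
    simp only [norm_norm] at hsum
    refine ⟨(∑' k, ‖A k x‖ ^ q.toReal) ^ (1 / q.toReal), ?_⟩
    rintro _ ⟨N, rfl⟩
    dsimp only
    rw [hnorm]
    gcongr
    exact hsum.sum_le_tsum _ fun _ _ => by positivity

end

theorem exists_exponent_of_lt {ρ : ℝ} (hρ : 1 ≤ ρ) {p₀ r₀ q : ℝ≥0∞}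
    (hr₀ : 1 / p₀ = (1 - 1 / ENNReal.ofReal ρ) + 1 / r₀) (hq : 1 < q) (hqp₀ : q < p₀) :
    ∃ r : ℝ, 0 < r ∧ 1 / ρ = (1 - 1 / q.toReal) + 1 / r ∧
      ENNReal.ofReal ρ ≤ ENNReal.ofReal r ∧ ENNReal.ofReal r < r₀ := by
  have hρ0 : 0 < ρ := one_pos.trans_le hρ
  have hq' : q ≠ ⊤ := hqp₀.ne_top
  have ht : 1 < q.toReal := by simpa using ENNReal.toReal_strict_mono hq' hq
  set u := 1 / q.toReal - (1 - 1 / ρ)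
  have hq_inv : 1 / q = ENNReal.ofReal (1 / q.toReal) := by
    rw [ENNReal.ofReal_div_of_pos (by linarith), ENNReal.ofReal_one, ENNReal.ofReal_toReal hq']
  have hc : 1 - 1 / ENNReal.ofReal ρ = ENNReal.ofReal (1 - 1 / ρ) := by
    rw [ENNReal.ofReal_sub _ (by positivity), ENNReal.ofReal_one, ENNReal.ofReal_div_of_pos hρ0,
      ENNReal.ofReal_one]
  have hu : 1 / r₀ < ENNReal.ofReal u := by
    rw [ENNReal.ofReal_sub _ (sub_nonneg.2 (div_le_one_of_le₀ hρ hρ0.le)), ← hq_inv, ← hc,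
      lt_tsub_iff_left, ← hr₀]
    exact ENNReal.div_lt_div_left one_ne_zero ENNReal.one_ne_top hqp₀
  have hu0 : 0 < u := ENNReal.ofReal_pos.1 (hu.trans_le' bot_le)
  refine ⟨1 / u, by positivity, by simp only [u, one_div_one_div]; ring, ?_, ?_⟩
  · refine ENNReal.ofReal_le_ofReal ((le_one_div hρ0 hu0).2 ?_)
    have : 1 / q.toReal ≤ 1 := div_le_one_of_le₀ ht.le (by linarith)
    simp only [u]; linarith
  · rwa [one_div, ENNReal.ofReal_inv_of_pos hu0, ENNReal.inv_lt_iff_inv_lt, ← one_div]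

theorem stmt_10_general (𝕜 : Type*) [RCLike 𝕜] (X : Type*) [NormedAddCommGroup X]
    [NormedSpace 𝕜 X] [CompleteSpace X]
    (Y : ℕ → Type*) [∀ k, NormedAddCommGroup (Y k)] [∀ k, NormedSpace 𝕜 (Y k)]
    (A : ∀ k, X →L[𝕜] Y k)
    (ρ : ℝ) (hρ : 1 ≤ ρ)
    (hcotype : ∃ C > (0 : ℝ), ∀ (m : ℕ) (v : Fin m → StrongDual 𝕜 X),
      ∃ ε : Fin m → 𝕜, (∀ j, ε j = 1 ∨ ε j = -1) ∧
        ‖∑ j, ε j • v j‖ ≥ C * (∑ j, ‖v j‖ ^ ρ) ^ (1 / ρ))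
    (p₀ r₀ : ℝ≥0∞)
    (hr₀ : 1 / p₀ = (1 - 1 / ENNReal.ofReal ρ) + 1 / r₀)
    (hA : ∀ r : ℝ≥0∞, ENNReal.ofReal ρ ≤ r → r < r₀ →
      ¬ Memℓp (fun k => ‖A k‖) r) :
    Dense {x : X | ∀ p : ℝ≥0∞, 1 ≤ p → p < p₀ →
      ¬ Memℓp (fun k => ‖A k x‖) p} := by
  obtain ⟨C, hC, hcot⟩ := hcotype
  have hresidual : ∀ q : ℝ≥0∞, 1 < q → q < p₀ →
      {x : X | ¬ Memℓp (fun k => ‖A k x‖) q} ∈ residual X := fun q hq hqp₀ => by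
    obtain ⟨r, hr, hexp, hρr, hrr₀⟩ := exists_exponent_of_lt hρ hr₀ hq hqp₀
    exact HasMCotypeWith.residual_setOf_not_memℓp hcot hC A hq hqp₀.ne_top hr hexp
      (hA _ hρr hrr₀)
  refine dense_of_mem_residual (Filter.mem_of_superset (countable_iInter_mem.2 fun s : ℚ =>
    countable_iInter_mem.2 fun hs : 1 < ((s : ℝ).toNNReal : ℝ≥0∞) ∧ _ < p₀ =>
      hresidual _ hs.1 hs.2) ?_)
  intro x hx p hp hpp₀ hmem
  obtain ⟨s, -, hps, hsp₀⟩ := ENNReal.lt_iff_exists_rat_btwn.1 hpp₀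
  exact Set.mem_iInter₂.1 hx s ⟨hp.trans_lt hps, hsp₀⟩ (hmem.of_exponent_ge hps.le)

/-- Theorem 2: if `X*` has `M`-cotype `ρ`, `p₀ ∈ (1, ρ/(ρ-1)]`,
`1/p₀ - 1/r₀ = 1 - 1/ρ`, and `(‖A₁‖, ‖A₂‖, …) ∉ ℓ_r` for every `r ∈ [ρ, r₀)`,
then `⋂_{p ∈ [1, p₀)} 𝒟_p` is dense in `X`. -/
theorem stmt_10 (𝕜 : Type*) [RCLike 𝕜] (X : Type*) [NormedAddCommGroup X]
    [NormedSpace 𝕜 X] [CompleteSpace X]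
    (Y : ℕ → Type*) [∀ k, NormedAddCommGroup (Y k)] [∀ k, NormedSpace 𝕜 (Y k)]
    (A : ∀ k, X →L[𝕜] Y k)
    (ρ : ℝ) (hρ : 1 ≤ ρ)
    (hcotype : ∃ C > (0 : ℝ), ∀ (m : ℕ) (v : Fin m → StrongDual 𝕜 X),
      ∃ ε : Fin m → 𝕜, (∀ j, ε j = 1 ∨ ε j = -1) ∧
        ‖∑ j, ε j • v j‖ ≥ C * (∑ j, ‖v j‖ ^ ρ) ^ (1 / ρ))
    (p₀ r₀ : ℝ≥0∞) (hp₀1 : 1 < p₀)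
    (hp₀2 : p₀ ≤ ENNReal.ofReal ρ / ENNReal.ofReal (ρ - 1))
    (hr₀ : 1 / p₀ = (1 - 1 / ENNReal.ofReal ρ) + 1 / r₀)
    (hA : ∀ r : ℝ≥0∞, ENNReal.ofReal ρ ≤ r → r < r₀ →
      ¬ Memℓp (fun k => ‖A k‖) r) :
    Dense {x : X | ∀ p : ℝ≥0∞, 1 ≤ p → p < p₀ →
      ¬ Memℓp (fun k => ‖A k x‖) p} :=
  stmt_10_general 𝕜 X Y A ρ hρ hcotype p₀ r₀ hr₀ hA
end

section
/- Let $X$ be a Banach space, $Y_k$ normed spaces, $A_k \in \mathcal{B}(X, Y_k)$, and suppose $X^*$ has $M$-cotype $\rho$ with constant $C$. For $p \in [1, \rho/(\rho-1)]$ and $n \in \mathbb{N}$, define $B_n : X \to \ell_p(Y_1,\ldots,Y_n)$ by $B_n x = (A_1 x, \ldots, A_n x)$. Then $\|B_n\| \geq C \|(\|A_1\|, \ldots, \|A_n\|)\|_r$, where $r$ is defined by $1/p - 1/r = 1 - 1/\rho$. -/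
/-!
Pass to adjoints. Up to any factor `t < 1`, each `A k` is normed by a functional `g k ∘L A k`
with `‖g k‖ ≤ 1`. For weights `c k ≥ 0`, the cotype inequality applied to `c k • (g k ∘L A k)`
yields signs `ε` with
`t * C * ‖(c k * ‖A k‖)‖_ρ ≤ ‖∑ ε k c k • (g k ∘L A k)‖ ≤ sup_{‖x‖ ≤ 1} ∑ c k ‖A k x‖ ≤ ‖c‖_q ‖B‖`,
the last step by Hölder with `1/p + 1/q = 1`. Since `1/ρ = 1/q + 1/r`, the weights
`c k = ‖A k‖ ^ (r/q)` turn the left-hand side into `t * C * ‖c‖_q * ‖(‖A k‖)‖_r`.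
For `r = ∞` a single coordinate suffices.
-/

open scoped ENNReal
open Filter Topology Finset

theorem Real.le_of_forall_lt_one_mul_le {x y : ℝ} (h : ∀ t, 0 < t → t < 1 → t * x ≤ y) :
    x ≤ y := by
  have hlim : Tendsto (fun t : ℝ => t * x) (𝓝[<] 1) (𝓝 x) :=
    ((continuous_mul_const x).tendsto' 1 x (one_mul x)).mono_left nhdsWithin_le_nhds
  exact le_of_tendsto hlim (eventually_of_mem (Ioo_mem_nhdsLT one_pos) fun t ht => h t ht.1 ht.2)

theorem Real.rpow_sum_const_mul_rpow {ι : Type*} (s : Finset ι) {t ρ : ℝ} (ht : 0 ≤ t)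
    (hρ : 0 < ρ) {x : ι → ℝ} (hx : ∀ i, 0 ≤ x i) :
    (∑ i ∈ s, (t * x i) ^ ρ) ^ (1 / ρ) = t * (∑ i ∈ s, x i ^ ρ) ^ (1 / ρ) := by
  simp_rw [Real.mul_rpow ht (hx _), ← mul_sum]
  rw [Real.mul_rpow (by positivity) (sum_nonneg fun i _ => by have := hx i; positivity),
    ← Real.rpow_mul ht, mul_one_div_cancel hρ.ne', Real.rpow_one]

theorem Real.sum_rpow_mul_le {ι : Type*} (s : Finset ι) {P : ℝ} (hP : 1 ≤ P) {w b : ι → ℝ}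
    (hw : ∀ i, 0 ≤ w i) (hb : ∀ i, 0 ≤ b i) :
    ∑ i ∈ s, w i ^ (1 - 1 / P) * b i ≤
      (∑ i ∈ s, w i) ^ (1 - 1 / P) * (∑ i ∈ s, b i ^ P) ^ (1 / P) := by
  obtain rfl | hP := hP.eq_or_lt
  · simp
  have hθ : 0 < 1 - 1 / P := by rw [sub_pos, div_lt_one (by linarith)]; exact hP
  have hconj : (1 - 1 / P)⁻¹.HolderConjugate P := by
    simpa using Real.HolderConjugate.one_sub_inv_inv (a := P⁻¹) (by positivity)
      (inv_lt_one_of_one_lt₀ hP)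
  calc ∑ i ∈ s, w i ^ (1 - 1 / P) * b i
      ≤ (∑ i ∈ s, (w i ^ (1 - 1 / P)) ^ (1 - 1 / P)⁻¹) ^ (1 / (1 - 1 / P)⁻¹) *
          (∑ i ∈ s, b i ^ P) ^ (1 / P) :=
        Real.inner_le_Lp_mul_Lq_of_nonneg s hconj (fun i _ => by have := hw i; positivity)
          fun i _ => hb i
    _ = _ := by
        rw [one_div (1 - 1 / P)⁻¹, inv_inv,
          sum_congr rfl fun i _ => Real.rpow_rpow_inv (hw i) hθ.ne']

namespace ContinuousLinearMap

variable {𝕜 E F : Type*} [RCLike 𝕜] [NormedAddCommGroup E] [NormedSpace 𝕜 E]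
  [NormedAddCommGroup F] [NormedSpace 𝕜 F]

theorem exists_norm_comp_gt_of_lt_opNorm (T : E →L[𝕜] F) {s : ℝ} (hs : s < ‖T‖) :
    ∃ g : StrongDual 𝕜 F, ‖g‖ ≤ 1 ∧ s < ‖g.comp T‖ := by
  obtain ⟨x, hx, hsx⟩ := T.exists_lt_apply_of_lt_opNorm hs
  obtain ⟨g, hg, hgx⟩ := exists_dual_vector'' 𝕜 (T x)
  refine ⟨g, hg, hsx.trans_le ?_⟩
  calc ‖T x‖ = ‖g.comp T x‖ := by simp [hgx]
    _ ≤ ‖g.comp T‖ * ‖x‖ := le_opNorm _ x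
    _ ≤ ‖g.comp T‖ := mul_le_of_le_one_right (norm_nonneg _) hx.le

end ContinuousLinearMap

def HasMCotype (𝕜 V : Type*) [RCLike 𝕜] [NormedAddCommGroup V] [NormedSpace 𝕜 V]
    (ρ C : ℝ) : Prop :=
  ∀ (m : ℕ) (v : Fin m → V), ∃ ε : Fin m → 𝕜, (∀ j, ε j = 1 ∨ ε j = -1) ∧
    ‖∑ j, ε j • v j‖ ≥ C * (∑ j, ‖v j‖ ^ ρ) ^ (1 / ρ)

namespace HasMCotype

open ContinuousLinearMap

variable {𝕜 X : Type*} [RCLike 𝕜] [NormedAddCommGroup X] [NormedSpace 𝕜 X] {ρ C M : ℝ}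

theorem le_of_sum_norm_apply_le (h : HasMCotype 𝕜 (StrongDual 𝕜 X) ρ C) {m : ℕ}
    (v : Fin m → StrongDual 𝕜 X) (hM : 0 ≤ M) (hv : ∀ x, ∑ j, ‖v j x‖ ≤ M * ‖x‖) :
    C * (∑ j, ‖v j‖ ^ ρ) ^ (1 / ρ) ≤ M := by
  obtain ⟨ε, hε, hineq⟩ := h m v
  refine hineq.trans (opNorm_le_bound _ hM fun x => ?_)
  have hε_norm : ∀ j, ‖ε j‖ = 1 := fun j => by rcases hε j with h | h <;> simp [h]
  calc ‖(∑ j, ε j • v j) x‖ ≤ ∑ j, ‖ε j • v j x‖ := by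
        simpa only [_root_.sum_apply, smul_apply] using norm_sum_le _ _
    _ = ∑ j, ‖v j x‖ := by simp only [norm_smul, hε_norm, one_mul]
    _ ≤ M * ‖x‖ := hv x

variable {n : ℕ} {Y : Fin n → Type*} [∀ k, NormedAddCommGroup (Y k)] [∀ k, NormedSpace 𝕜 (Y k)]

theorem mul_rpow_sum_weighted_opNorm_le (h : HasMCotype 𝕜 (StrongDual 𝕜 X) ρ C) (hρ : 0 < ρ)
    (hC : 0 ≤ C) (A : ∀ k, X →L[𝕜] Y k) {c : Fin n → ℝ} (hc : ∀ k, 0 ≤ c k) (hM : 0 ≤ M)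
    (hAM : ∀ x, ∑ k, c k * ‖A k x‖ ≤ M * ‖x‖) :
    C * (∑ k, (c k * ‖A k‖) ^ ρ) ^ (1 / ρ) ≤ M := by
  refine Real.le_of_forall_lt_one_mul_le fun t ht0 ht1 => ?_
  have hnorming : ∀ k, ∃ g : StrongDual 𝕜 (Y k), ‖g‖ ≤ 1 ∧ t * ‖A k‖ ≤ ‖g.comp (A k)‖ := by
    intro k
    rcases (norm_nonneg (A k)).eq_or_lt with h0 | hpos
    · exact ⟨0, by simp, by simp [← h0]⟩
    · obtain ⟨g, hg, hgA⟩ := (A k).exists_norm_comp_gt_of_lt_opNorm (mul_lt_of_lt_one_left hpos ht1)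
      exact ⟨g, hg, hgA.le⟩
  choose g hg hgA using hnorming
  have hc_norm : ∀ k, ‖(c k : 𝕜)‖ = c k := fun k => by simp [abs_of_nonneg (hc k)]
  have hv := h.le_of_sum_norm_apply_le (fun k => (c k : 𝕜) • (g k).comp (A k)) hM fun x => by
    refine le_trans (sum_le_sum fun k _ => ?_) (hAM x)
    rw [smul_apply, norm_smul, hc_norm, comp_apply]
    exact mul_le_mul_of_nonneg_left ((g k).le_of_opNorm_le (hg k) _ |>.trans_eq (one_mul _)) (hc k)
  calc t * (C * (∑ k, (c k * ‖A k‖) ^ ρ) ^ (1 / ρ))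
      = C * (∑ k, (t * (c k * ‖A k‖)) ^ ρ) ^ (1 / ρ) := by
        rw [Real.rpow_sum_const_mul_rpow _ ht0.le hρ fun k => mul_nonneg (hc k) (norm_nonneg _)]
        ring
    _ ≤ C * (∑ k, ‖(c k : 𝕜) • (g k).comp (A k)‖ ^ ρ) ^ (1 / ρ) := by
        have htcA k : 0 ≤ t * (c k * ‖A k‖) := by have := hc k; positivity
        gcongr with k
        · exact sum_nonneg fun k _ => Real.rpow_nonneg (htcA k) ρ
        · exact htcA k
        rw [norm_smul, hc_norm, mul_left_comm]
        exact mul_le_mul_of_nonneg_left (hgA k) (hc k)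
    _ ≤ M := hv

theorem mul_rpow_sum_opNorm_le (h : HasMCotype 𝕜 (StrongDual 𝕜 X) ρ C) (hρ : 0 < ρ)
    (hC : 0 ≤ C) (A : ∀ k, X →L[𝕜] Y k) {P R : ℝ} (hP : 1 ≤ P) (hR : 0 < R)
    (hPR : 1 / P = (1 - 1 / ρ) + 1 / R) (hM : 0 ≤ M)
    (hAM : ∀ x, (∑ k, ‖A k x‖ ^ P) ^ (1 / P) ≤ M * ‖x‖) :
    C * (∑ k, ‖A k‖ ^ R) ^ (1 / R) ≤ M := by
  set S := ∑ k, ‖A k‖ ^ R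
  have hS : 0 ≤ S := sum_nonneg fun k _ => by positivity
  obtain hS0 | hS0 := hS.eq_or_lt
  · rw [← hS0, Real.zero_rpow (one_div_pos.2 hR).ne', mul_zero]
    exact hM
  have hθ : 0 ≤ 1 - 1 / P := sub_nonneg.2 ((div_le_one (by linarith)).2 hP)
  have hexp : (R * (1 - 1 / P) + 1) * ρ = R := by
    rw [hPR]
    field_simp
    ring
  have hterm : ∀ k, ((‖A k‖ ^ R) ^ (1 - 1 / P) * ‖A k‖) ^ ρ = ‖A k‖ ^ R := fun k => by
    rw [← Real.rpow_mul (norm_nonneg _), ← Real.rpow_add_one' (norm_nonneg _) (by positivity),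
      ← Real.rpow_mul (norm_nonneg _), hexp]
  have key := h.mul_rpow_sum_weighted_opNorm_le hρ hC A (c := fun k => (‖A k‖ ^ R) ^ (1 - 1 / P))
    (fun k => by positivity) (M := S ^ (1 - 1 / P) * M) (by positivity) fun x => calc
      ∑ k, (‖A k‖ ^ R) ^ (1 - 1 / P) * ‖A k x‖
          ≤ S ^ (1 - 1 / P) * (∑ k, ‖A k x‖ ^ P) ^ (1 / P) :=
        Real.sum_rpow_mul_le _ hP (fun k => by positivity) fun k => norm_nonneg _
      _ ≤ S ^ (1 - 1 / P) * M * ‖x‖ := by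
        rw [mul_assoc]
        gcongr
        exact hAM x
  have hsplit : S ^ (1 / ρ) = S ^ (1 - 1 / P) * S ^ (1 / R) := by
    rw [← Real.rpow_add hS0, hPR]
    ring_nf
  simp_rw [hterm] at key
  change C * S ^ (1 / ρ) ≤ _ at key
  rw [hsplit, mul_left_comm C] at key
  exact le_of_mul_le_mul_left key (by positivity)

theorem mul_opNorm_le_opNorm (h : HasMCotype 𝕜 (StrongDual 𝕜 X) ρ C) (hρ : 0 < ρ)
    (hC : 0 ≤ C) {Z : Type*} [NormedAddCommGroup Z] [NormedSpace 𝕜 Z] (T : X →L[𝕜] Z) :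
    C * ‖T‖ ≤ ‖T‖ := by
  have := h.mul_rpow_sum_weighted_opNorm_le hρ hC (fun _ : Fin 1 => T) (c := 1)
    (fun _ => zero_le_one) (norm_nonneg T) fun x => by simpa using T.le_opNorm x
  simpa [one_div, Real.rpow_rpow_inv (norm_nonneg T) hρ.ne'] using this

end HasMCotype

theorem ENNReal.ne_top_and_one_div_toReal_eq {p r : ℝ≥0∞} {ρ : ℝ} (hρ : 1 ≤ ρ) (hr0 : r ≠ 0)
    (hr_top : r ≠ ∞) (hr : 1 / p = (1 - 1 / ENNReal.ofReal ρ) + 1 / r) :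
    p ≠ ∞ ∧ 1 / p.toReal = (1 - 1 / ρ) + 1 / r.toReal := by
  have hp_top : p ≠ ∞ := by
    rintro rfl
    simp only [one_div, ENNReal.inv_top] at hr
    exact hr_top (ENNReal.inv_eq_zero.mp (add_eq_zero.mp hr.symm).2)
  refine ⟨hp_top, ?_⟩
  have hρ_inv : 1 / ENNReal.ofReal ρ ≤ 1 := by
    rw [one_div]; exact ENNReal.inv_le_one.mpr (ENNReal.one_le_ofReal.mpr hρ)
  have := congrArg ENNReal.toReal hr
  rwa [ENNReal.toReal_add (by finiteness) (by simp [hr0]),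
    ENNReal.toReal_sub_of_le hρ_inv (by simp), ENNReal.toReal_div, ENNReal.toReal_div, ENNReal.toReal_div, ENNReal.toReal_ofReal (by linarith),
    ENNReal.toReal_one] at this

theorem stmt_15_general (𝕜 : Type*) [RCLike 𝕜] (X : Type*) [NormedAddCommGroup X]
    [NormedSpace 𝕜 X]
    (Y : ℕ → Type*) [∀ k, NormedAddCommGroup (Y k)] [∀ k, NormedSpace 𝕜 (Y k)]
    (A : ∀ k, X →L[𝕜] Y k)
    (ρ : ℝ) (hρ : 1 ≤ ρ) (C : ℝ) (hC : 0 < C)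
    (hcotype : ∀ (m : ℕ) (v : Fin m → StrongDual 𝕜 X),
      ∃ ε : Fin m → 𝕜, (∀ j, ε j = 1 ∨ ε j = -1) ∧
        ‖∑ j, ε j • v j‖ ≥ C * (∑ j, ‖v j‖ ^ ρ) ^ (1 / ρ))
    (p r : ℝ≥0∞) [Fact (1 ≤ p)] [Fact (1 ≤ r)]
    (hr : 1 / p = (1 - 1 / ENNReal.ofReal ρ) + 1 / r)
    (n : ℕ) (B : X →L[𝕜] PiLp p (fun k : Fin n => Y k))
    (hB : ∀ (x : X) (k : Fin n), B x k = A k x) :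
    ‖B‖ ≥ C * ‖(WithLp.equiv r (Fin n → ℝ)).symm (fun k : Fin n => ‖A k‖)‖ := by
  have hρ0 : 0 < ρ := by linarith
  rw [WithLp.equiv_symm_apply, ge_iff_le]
  rcases eq_or_ne r ∞ with rfl | hr_top
  · have hA_le_B (k : Fin n) : ‖A k‖ ≤ ‖B‖ := ContinuousLinearMap.opNorm_le_bound _ (norm_nonneg B)
      fun x => hB x k ▸ (PiLp.norm_apply_le (B x) k).trans (B.le_opNorm x)
    rw [PiLp.norm_toLp, ← le_div_iff₀' hC, pi_norm_le_iff_of_nonneg (by positivity)]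
    intro k
    rw [norm_norm, le_div_iff₀' hC]
    exact (HasMCotype.mul_opNorm_le_opNorm hcotype hρ0 hC.le (A k)).trans (hA_le_B k)
  · have hr0 : r ≠ 0 := (one_pos.trans_le (Fact.out : (1 : ℝ≥0∞) ≤ r)).ne'
    obtain ⟨hp_top, hpr⟩ := ENNReal.ne_top_and_one_div_toReal_eq hρ hr0 hr_top hr
    have hP : 1 ≤ p.toReal := by simpa using ENNReal.toReal_mono hp_top (Fact.out : 1 ≤ p)
    rw [PiLp.norm_eq_sum (ENNReal.toReal_pos hr0 hr_top)]
    simp only [norm_norm]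
    refine HasMCotype.mul_rpow_sum_opNorm_le hcotype hρ0 hC.le (fun k : Fin n => A k) hP
      (ENNReal.toReal_pos hr0 hr_top) hpr (norm_nonneg B) fun x => ?_
    simpa only [PiLp.norm_eq_sum (by linarith : 0 < p.toReal), hB] using B.le_opNorm x

/-- If `X*` has `M`-cotype `ρ` with constant `C`, `p ∈ [1, ρ/(ρ-1)]` and
`Bₙ x = (A₁ x, …, Aₙ x) ∈ ℓ_p(Y₁,…,Yₙ)`, then
`‖Bₙ‖ ≥ C * ‖(‖A₁‖,…,‖Aₙ‖)‖_r` where `1/p - 1/r = 1 - 1/ρ`. -/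
theorem stmt_15 (𝕜 : Type*) [RCLike 𝕜] (X : Type*) [NormedAddCommGroup X]
    [NormedSpace 𝕜 X] [CompleteSpace X]
    (Y : ℕ → Type*) [∀ k, NormedAddCommGroup (Y k)] [∀ k, NormedSpace 𝕜 (Y k)]
    (A : ∀ k, X →L[𝕜] Y k)
    (ρ : ℝ) (hρ : 1 ≤ ρ) (C : ℝ) (hC : 0 < C)
    (hcotype : ∀ (m : ℕ) (v : Fin m → StrongDual 𝕜 X),
      ∃ ε : Fin m → 𝕜, (∀ j, ε j = 1 ∨ ε j = -1) ∧
        ‖∑ j, ε j • v j‖ ≥ C * (∑ j, ‖v j‖ ^ ρ) ^ (1 / ρ))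
    (p r : ℝ≥0∞) [Fact (1 ≤ p)] [Fact (1 ≤ r)]
    (hp2 : p ≤ ENNReal.ofReal ρ / ENNReal.ofReal (ρ - 1))
    (hr : 1 / p = (1 - 1 / ENNReal.ofReal ρ) + 1 / r)
    (n : ℕ) (B : X →L[𝕜] PiLp p (fun k : Fin n => Y k))
    (hB : ∀ (x : X) (k : Fin n), B x k = A k x) :
    ‖B‖ ≥ C * ‖(WithLp.equiv r (Fin n → ℝ)).symm (fun k : Fin n => ‖A k‖)‖ :=
  stmt_15_general 𝕜 X Y A ρ hρ C hC hcotype p r hr n B hB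
end
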